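/- There is an absolute constant C > 0 such that for every n ≥ 2, every ε ∈ (0,1), every d ∈ ℕ and every set X ⊆ ℝ^d with |X| = n, there exists a linear map f : ℝ^d → ℝ^{d′} with d′ ≤ ⌈C·ε^{−2}·log n⌉ such that for all p, q ∈ X: (1−ε)‖p−q‖ ≤ ‖f(p)−f(q)‖ ≤ (1+ε)‖p−q‖. -/

import Mathlib

/-!
Take for the embedding `k^{-1/2}` times a `k × d` matrix of signs `±1` (Achlioptas), and count
sign matrices instead of computing probabilities. For a unit vector `u`, `k · ‖f u‖²` is a sum of
`k` independent squares of Rademacher sums `∑ ±uᵢ`. A Chernoff bound, with the moment generating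
function of the square controlled by a Gaussian linearization for the upper tail and by the second
and fourth moments for the lower tail, shows that at most a fraction `2 exp (-3ε²k/25)` of all
sign matrices distort `u` by more than a factor `1 ± ε`. A union bound over the at most `n²`
normalized differences of points of `X` leaves a good sign matrix once `k ≥ 50 ε⁻² log n`.
-/

open scoped Classical RealInnerProductSpace

noncomputable section

/-- A polygonal curve in `ℝ^d`: vertices `v_1, …, v_m`, instants `0 = t_1 < … < t_m = 1`,
and a parameterization `toFun : [0,1] → ℝ^d` that interpolates affinely (traces the line
segment) between consecutive vertices.  `m` is the complexity of the curve. -/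
structure PolyCurve (d : ℕ) where
  m : ℕ
  m_pos : 0 < m
  vertex : Fin m → EuclideanSpace ℝ (Fin d)
  instant : Fin m → ℝ
  toFun : ℝ → EuclideanSpace ℝ (Fin d)
  instant_strictMono : StrictMono instant
  instant_first : instant ⟨0, m_pos⟩ = 0
  instant_last : instant ⟨m - 1, Nat.sub_lt m_pos one_pos⟩ = 1
  affine_on_segments : ∀ i j : Fin m, (j : ℕ) = (i : ℕ) + 1 → ∀ s ∈ Set.Icc (0:ℝ) 1,
    toFun ((1 - s) * instant i + s * instant j) = (1 - s) • vertex i + s • vertex j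

/-- The image curve `F(τ)` under a linear map `f`: same instants, vertices `f(v_i)`,
parameterization `f ∘ τ`. -/
def PolyCurve.map {d d' : ℕ} (f : EuclideanSpace ℝ (Fin d) →ₗ[ℝ] EuclideanSpace ℝ (Fin d'))
    (τ : PolyCurve d) : PolyCurve d' where
  m := τ.m
  m_pos := τ.m_pos
  vertex := fun i => f (τ.vertex i)
  instant := τ.instant
  toFun := fun t => f (τ.toFun t)
  instant_strictMono := τ.instant_strictMono
  instant_first := τ.instant_first
  instant_last := τ.instant_last
  affine_on_segments := by
    intro i j hj s hs
    simp only [τ.affine_on_segments i j hj s hs, map_add, map_smul]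

/-- A weak reparameterization: a continuous map of `[0,1]` to itself fixing the endpoints. -/
def IsWeakReparam (φ : ℝ → ℝ) : Prop :=
  ContinuousOn φ (Set.Icc 0 1) ∧ Set.MapsTo φ (Set.Icc 0 1) (Set.Icc 0 1) ∧ φ 0 = 0 ∧ φ 1 = 1

/-- A reparameterization: a continuous bijection of `[0,1]` onto itself fixing the endpoints. -/
def IsReparam (φ : ℝ → ℝ) : Prop :=
  IsWeakReparam φ ∧ Set.BijOn φ (Set.Icc 0 1) (Set.Icc 0 1)

/-- The (continuous) Fréchet distance between two polygonal curves. -/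
def frechetDist {d : ℕ} (σ τ : PolyCurve d) : ℝ :=
  sInf { r | ∃ φ ψ : ℝ → ℝ, IsReparam φ ∧ IsReparam ψ ∧
    r = ⨆ t : Set.Icc (0:ℝ) 1, ‖σ.toFun (φ t.1) - τ.toFun (ψ t.1)‖ }

/-- The weak Fréchet distance between two polygonal curves. -/
def weakFrechetDist {d : ℕ} (σ τ : PolyCurve d) : ℝ :=
  sInf { r | ∃ φ ψ : ℝ → ℝ, IsWeakReparam φ ∧ IsWeakReparam ψ ∧
    r = ⨆ t : Set.Icc (0:ℝ) 1, ‖σ.toFun (φ t.1) - τ.toFun (ψ t.1)‖ }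

/-- `f` is a `(1 ± ε)`-embedding for the point set `P`. -/
def IsJLEmbedding {d d' : ℕ} (ε : ℝ) (f : EuclideanSpace ℝ (Fin d) → EuclideanSpace ℝ (Fin d'))
    (P : Set (EuclideanSpace ℝ (Fin d))) : Prop :=
  ∀ p ∈ P, ∀ q ∈ P,
    (1 - ε) * ‖p - q‖ ≤ ‖f p - f q‖ ∧ ‖f p - f q‖ ≤ (1 + ε) * ‖p - q‖

/-- `ρ` is a vertex-restricted `ℓ`-simplification of `τ`: it has at most `ℓ` vertices, and its
vertex sequence is a subsequence of the vertex sequence of `τ` starting with the first vertex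
of `τ` and ending with its last vertex. -/
def IsVRSimplification {d : ℕ} (ℓ : ℕ) (τ ρ : PolyCurve d) : Prop :=
  ρ.m ≤ ℓ ∧ ∃ g : Fin ρ.m → Fin τ.m, StrictMono g ∧
    (∀ i, ρ.vertex i = τ.vertex (g i)) ∧
    g ⟨0, ρ.m_pos⟩ = ⟨0, τ.m_pos⟩ ∧
    g ⟨ρ.m - 1, Nat.sub_lt ρ.m_pos one_pos⟩ = ⟨τ.m - 1, Nat.sub_lt τ.m_pos one_pos⟩

/-- The optimal `(k,ℓ)`-median cost of a finite set `T` of polygonal curves: the infimum, over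
all sets `C` of `k` polygonal curves each of complexity at most `ℓ`, of
`∑_{τ ∈ T} min_{c ∈ C} d_F(τ, c)`. -/
def kMedianCost {d : ℕ} (k ℓ : ℕ) (T : Finset (PolyCurve d)) : ℝ :=
  sInf { r | ∃ C : Finset (PolyCurve d), C.card = k ∧ (∀ c ∈ C, c.m ≤ ℓ) ∧
    r = ∑ τ ∈ T, sInf ((fun c => frechetDist τ c) '' ↑C) }

open Real Finset MeasureTheory

lemma Real.exp_neg_le_one_sub_add_sq_div_two {u : ℝ} (hu : 0 ≤ u) :
    exp (-u) ≤ 1 - u + u ^ 2 / 2 := by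
  have hq : 0 < 1 + u + u ^ 2 / 2 := by positivity
  -- `(1 + u + u²/2)(1 - u + u²/2) = 1 + u⁴/4`
  calc exp (-u) = (exp u)⁻¹ := exp_neg u
    _ ≤ (1 + u + u ^ 2 / 2)⁻¹ := inv_anti₀ hq (quadratic_le_exp_of_nonneg hu)
    _ ≤ 1 - u + u ^ 2 / 2 := by
      rw [inv_le_iff_one_le_mul₀' hq]
      nlinarith [pow_nonneg hu 4]

lemma Real.exp_neg_le_sqrt_one_sub_two_mul {l : ℝ} (hl0 : 0 ≤ l) (hl : l ≤ 1 / 5) :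
    exp (-(l + 2 * l ^ 2)) ≤ √(1 - 2 * l) := by
  rw [le_sqrt (exp_pos _).le (by linarith), ← exp_nat_mul]
  have hu : 0 ≤ 2 * l + 4 * l ^ 2 := by positivity
  calc exp ((2 : ℕ) * -(l + 2 * l ^ 2)) = exp (-(2 * l + 4 * l ^ 2)) := by push_cast; ring_nf
    _ ≤ 1 - (2 * l + 4 * l ^ 2) + (2 * l + 4 * l ^ 2) ^ 2 / 2 :=
      exp_neg_le_one_sub_add_sq_div_two hu
    _ ≤ 1 - 2 * l := by nlinarith [mul_nonneg (sq_nonneg l) (sq_nonneg l), pow_nonneg hl0 3]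

lemma Real.exp_mul_sub_sq_div_two (c g : ℝ) :
    exp (c * g - g ^ 2 / 2) = exp (c ^ 2 / 2) * exp (-(1 / 2) * (g - c) ^ 2) := by
  rw [← exp_add]; ring_nf

lemma integrable_exp_mul_sub_sq_div_two (c : ℝ) :
    Integrable fun g : ℝ => exp (c * g - g ^ 2 / 2) := by
  simp_rw [exp_mul_sub_sq_div_two c]
  exact ((integrable_exp_neg_mul_sq (by norm_num)).comp_sub_right c).const_mul _

lemma integral_exp_mul_sub_sq_div_two (c : ℝ) :
    ∫ g, exp (c * g - g ^ 2 / 2) = √(2 * π) * exp (c ^ 2 / 2) := by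
  simp_rw [exp_mul_sub_sq_div_two c]
  rw [integral_const_mul, integral_sub_right_eq_self (fun g => exp (-(1 / 2) * g ^ 2)),
    integral_gaussian, show π / (1 / 2) = 2 * π by ring, mul_comm]

def boolSign (b : Bool) : ℝ := if b then 1 else -1

def rademacherSum {d : ℕ} (x : Fin d → ℝ) (ω : Fin d → Bool) : ℝ :=
  ∑ i, boolSign (ω i) * x i

namespace rademacherSum

variable {d : ℕ}

lemma cons (x : Fin (d + 1) → ℝ) (b : Bool) (ω : Fin d → Bool) :
    rademacherSum x (Fin.cons b ω) = boolSign b * x 0 + rademacherSum (Fin.tail x) ω :=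
  Fin.sum_univ_succ _

lemma sum_comp_succ (G : ℝ → ℝ) (x : Fin (d + 1) → ℝ) :
    ∑ ω, G (rademacherSum x ω) =
      ∑ ω, (G (rademacherSum (Fin.tail x) ω + x 0) + G (rademacherSum (Fin.tail x) ω - x 0)) := by
  rw [← (Fin.consEquiv fun _ => Bool).sum_comp, Fintype.sum_prod_type, Fintype.sum_bool,
    ← sum_add_distrib]
  refine sum_congr rfl fun ω _ => ?_
  change G (rademacherSum x (Fin.cons true ω)) + G (rademacherSum x (Fin.cons false ω)) = _
  simp only [rademacherSum.cons, boolSign, if_true, Bool.false_eq_true, if_false]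
  ring_nf

lemma sum_sq (x : Fin d → ℝ) : ∑ ω, rademacherSum x ω ^ 2 = 2 ^ d * ∑ i, x i ^ 2 := by
  induction d with
  | zero => simp [rademacherSum]
  | succ d ih =>
    rw [sum_comp_succ (· ^ 2), Fin.sum_univ_succ]
    have expand : ∀ s c : ℝ, (s + c) ^ 2 + (s - c) ^ 2 = 2 * s ^ 2 + 2 * c ^ 2 := fun s c => by ring
    simp only [expand, sum_add_distrib, ← mul_sum, ih, sum_const, card_univ, Fintype.card_fun,
      Fintype.card_bool, Fintype.card_fin, nsmul_eq_mul, Fin.tail]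
    push_cast
    ring

lemma sum_pow_four_le (x : Fin d → ℝ) :
    ∑ ω, rademacherSum x ω ^ 4 ≤ 3 * 2 ^ d * (∑ i, x i ^ 2) ^ 2 := by
  induction d with
  | zero => simp [rademacherSum]
  | succ d ih =>
    rw [sum_comp_succ (· ^ 4), Fin.sum_univ_succ]
    have expand : ∀ s c : ℝ, (s + c) ^ 4 + (s - c) ^ 4 =
        2 * s ^ 4 + 12 * c ^ 2 * s ^ 2 + 2 * c ^ 4 := fun s c => by ring
    simp only [expand, sum_add_distrib, ← mul_sum, sum_sq, sum_const, card_univ,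
      Fintype.card_fun, Fintype.card_bool, Fintype.card_fin, nsmul_eq_mul]
    have h4 := ih (Fin.tail x)
    have h2 : (0 : ℝ) ≤ 2 ^ d := by positivity
    simp only [Fin.tail] at h4 ⊢
    push_cast
    rw [pow_succ (2 : ℝ) d]
    nlinarith [mul_nonneg h2 (pow_nonneg (sq_nonneg (x 0)) 2)]

lemma sum_exp_mul_le (x : Fin d → ℝ) (t : ℝ) :
    ∑ ω, exp (t * rademacherSum x ω) ≤ 2 ^ d * exp (t ^ 2 / 2 * ∑ i, x i ^ 2) := by
  induction d with
  | zero => simp [rademacherSum]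
  | succ d ih =>
    rw [sum_comp_succ (fun s => exp (t * s)), Fin.sum_univ_succ]
    have pair : ∀ s c : ℝ, exp (t * (s + c)) + exp (t * (s - c)) = 2 * cosh (t * c) * exp (t * s) :=
      fun s c => by rw [cosh_eq, mul_add, mul_sub, exp_add, exp_sub, exp_neg]; ring
    simp only [pair, ← mul_sum]
    calc 2 * cosh (t * x 0) * ∑ ω, exp (t * rademacherSum (Fin.tail x) ω)
        ≤ 2 * exp ((t * x 0) ^ 2 / 2) * (2 ^ d * exp (t ^ 2 / 2 * ∑ i, Fin.tail x i ^ 2)) := by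
          gcongr
          · exact cosh_le_exp_half_sq _
          · exact ih (Fin.tail x)
      _ = 2 ^ (d + 1) * exp (t ^ 2 / 2 * (x 0 ^ 2 + ∑ i : Fin d, x i.succ ^ 2)) := by
          rw [mul_mul_mul_comm, ← exp_add, ← pow_succ']
          simp only [Fin.tail]
          ring_nf

variable {x : Fin d → ℝ}

lemma sum_exp_neg_mul_sq_le (hx : ∑ i, x i ^ 2 = 1) {l : ℝ} (hl : 0 ≤ l) :
    ∑ ω, exp (-(l * rademacherSum x ω ^ 2)) ≤ 2 ^ d * exp (-l + 3 / 2 * l ^ 2) := by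
  have h4 := sum_pow_four_le x
  rw [hx] at h4
  calc ∑ ω, exp (-(l * rademacherSum x ω ^ 2))
      ≤ ∑ ω, (1 - l * rademacherSum x ω ^ 2 + l ^ 2 / 2 * rademacherSum x ω ^ 4) :=
        sum_le_sum fun ω _ => (exp_neg_le_one_sub_add_sq_div_two (by positivity)).trans_eq
          (by ring)
    _ ≤ 2 ^ d * (1 - l + 3 / 2 * l ^ 2) := by
        simp only [sum_add_distrib, sum_sub_distrib, ← mul_sum, sum_sq, hx, sum_const, card_univ,
          Fintype.card_fun, Fintype.card_bool, Fintype.card_fin, nsmul_eq_mul]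
        push_cast
        nlinarith [mul_le_mul_of_nonneg_left h4 (by positivity : 0 ≤ l ^ 2 / 2)]
    _ ≤ 2 ^ d * exp (-l + 3 / 2 * l ^ 2) := by
        gcongr
        linarith [add_one_le_exp (-l + 3 / 2 * l ^ 2)]

/-- The Gaussian linearization `exp (s² / 2) = 𝔼 exp (s g)` turns the square into the
moment generating function of `rademacherSum`. -/
lemma sum_exp_mul_sq_le (hx : ∑ i, x i ^ 2 = 1) {l : ℝ} (hl0 : 0 ≤ l) (hl : l < 1 / 2) :
    ∑ ω, exp (l * rademacherSum x ω ^ 2) ≤ 2 ^ d / √(1 - 2 * l) := by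
  set a := √(2 * l)
  have ha : a ^ 2 = 2 * l := sq_sqrt (by linarith)
  have linearize : ∀ ω, exp (l * rademacherSum x ω ^ 2) =
      (√(2 * π))⁻¹ * ∫ g, exp (a * rademacherSum x ω * g - g ^ 2 / 2) := fun ω => by
    rw [integral_exp_mul_sub_sq_div_two, inv_mul_cancel_left₀ (by positivity), mul_pow, ha]
    ring_nf
  have pointwise : ∀ g : ℝ, ∑ ω, exp (a * rademacherSum x ω * g - g ^ 2 / 2) ≤
      2 ^ d * exp (-(1 / 2 - l) * g ^ 2) := fun g => by
    calc ∑ ω, exp (a * rademacherSum x ω * g - g ^ 2 / 2)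
        = (∑ ω, exp (a * g * rademacherSum x ω)) * exp (-(g ^ 2 / 2)) := by
          rw [sum_mul]
          exact sum_congr rfl fun ω _ => by rw [← exp_add]; ring_nf
      _ ≤ 2 ^ d * exp ((a * g) ^ 2 / 2 * ∑ i, x i ^ 2) * exp (-(g ^ 2 / 2)) := by
          gcongr; exact sum_exp_mul_le x _
      _ = 2 ^ d * exp (-(1 / 2 - l) * g ^ 2) := by
          rw [hx, mul_assoc, ← exp_add, mul_pow, ha]; ring_nf
  calc ∑ ω, exp (l * rademacherSum x ω ^ 2)
      = (√(2 * π))⁻¹ * ∫ g, ∑ ω, exp (a * rademacherSum x ω * g - g ^ 2 / 2) := by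
        rw [integral_finsetSum _ fun ω _ => integrable_exp_mul_sub_sq_div_two _, mul_sum]
        exact sum_congr rfl fun ω _ => linearize ω
    _ ≤ (√(2 * π))⁻¹ * ∫ g, 2 ^ d * exp (-(1 / 2 - l) * g ^ 2) := by
        gcongr
        · exact integrable_finsetSum _ fun ω _ => integrable_exp_mul_sub_sq_div_two _
        · exact (integrable_exp_neg_mul_sq (by linarith)).const_mul _
        · exact fun g => pointwise g
    _ = 2 ^ d / √(1 - 2 * l) := by
        rw [integral_const_mul, integral_gaussian,
          show π / (1 / 2 - l) = 2 * π / (1 - 2 * l) by field_simp,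
          sqrt_div' _ (by linarith : 0 ≤ 1 - 2 * l)]
        field_simp

end rademacherSum

lemma card_le_pow_mul_exp_of_sum_exp_le {α : Type*} [Fintype α] {k : ℕ} (F : α → ℝ)
    {t a b N : ℝ} (ht : 0 ≤ t) (hF : ∑ ω, exp (t * F ω) ≤ N * exp b)
    (s : Finset (Fin k → α)) (hs : ∀ σ ∈ s, a ≤ ∑ j, F (σ j)) :
    (#s : ℝ) ≤ N ^ k * exp (k * b - t * a) := by
  have markov : (#s : ℝ) * exp (t * a) ≤ ∑ σ : Fin k → α, exp (t * ∑ j, F (σ j)) :=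
    calc (#s : ℝ) * exp (t * a) = ∑ σ ∈ s, exp (t * a) := by rw [sum_const, nsmul_eq_mul]
      _ ≤ ∑ σ ∈ s, exp (t * ∑ j, F (σ j)) := sum_le_sum fun σ hσ => by gcongr; exact hs σ hσ
      _ ≤ _ := sum_le_univ_sum_of_nonneg fun _ => (exp_pos _).le
  have independence : ∑ σ : Fin k → α, exp (t * ∑ j, F (σ j)) = (∑ ω, exp (t * F ω)) ^ k := by
    rw [Fintype.sum_pow]
    simp only [mul_sum, exp_sum]
  rw [sub_eq_add_neg, exp_add, ← mul_assoc, exp_neg, ← div_eq_mul_inv, le_div_iff₀ (exp_pos _),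
    exp_nat_mul, ← mul_pow]
  exact (markov.trans_eq independence).trans
    (pow_le_pow_left₀ (sum_nonneg fun _ _ => (exp_pos _).le) hF k)

section Tails

variable {d k : ℕ} {x : Fin d → ℝ} {ε : ℝ}

lemma card_le_of_forall_le_sum_rademacherSum_sq (hx : ∑ i, x i ^ 2 = 1) (hε0 : 0 ≤ ε)
    (hε1 : ε ≤ 1) (s : Finset (Fin k → Fin d → Bool))
    (hs : ∀ σ ∈ s, (1 + ε) * k ≤ ∑ j, rademacherSum x (σ j) ^ 2) :
    (#s : ℝ) ≤ 2 ^ (d * k) * exp (-(3 / 25) * ε ^ 2 * k) := by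
  have hl : ε / 5 ≤ 1 / 5 := by linarith
  have mgf : ∑ ω, exp (ε / 5 * rademacherSum x ω ^ 2) ≤ 2 ^ d * exp (ε / 5 + 2 * (ε / 5) ^ 2) :=
    calc _ ≤ 2 ^ d / √(1 - 2 * (ε / 5)) :=
          rademacherSum.sum_exp_mul_sq_le hx (by positivity) (by linarith)
      _ ≤ 2 ^ d / exp (-(ε / 5 + 2 * (ε / 5) ^ 2)) := by
          gcongr; exact exp_neg_le_sqrt_one_sub_two_mul (by positivity) hl
      _ = _ := by rw [exp_neg, div_inv_eq_mul]
  refine (card_le_pow_mul_exp_of_sum_exp_le _ (by positivity) mgf s hs).trans_eq ?_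
  rw [pow_mul]
  ring_nf

lemma card_le_of_forall_sum_rademacherSum_sq_le (hx : ∑ i, x i ^ 2 = 1) (hε0 : 0 ≤ ε)
    (s : Finset (Fin k → Fin d → Bool))
    (hs : ∀ σ ∈ s, ∑ j, rademacherSum x (σ j) ^ 2 ≤ (1 - ε) * k) :
    (#s : ℝ) ≤ 2 ^ (d * k) * exp (-(1 / 6) * ε ^ 2 * k) := by
  have mgf : ∑ ω, exp (ε / 3 * -rademacherSum x ω ^ 2) ≤
      2 ^ d * exp (-(ε / 3) + 3 / 2 * (ε / 3) ^ 2) := by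
    simpa only [mul_neg] using rademacherSum.sum_exp_neg_mul_sq_le hx (by positivity : 0 ≤ ε / 3)
  have hs' : ∀ σ ∈ s, -((1 - ε) * k) ≤ ∑ j, -rademacherSum x (σ j) ^ 2 := fun σ hσ => by
    rw [sum_neg_distrib]; linarith [hs σ hσ]
  refine (card_le_pow_mul_exp_of_sum_exp_le _ (by positivity) mgf s hs').trans_eq ?_
  rw [pow_mul]
  ring_nf

end Tails

def signMatrix {m n : ℕ} (σ : Fin m → Fin n → Bool) : Matrix (Fin m) (Fin n) ℝ :=
  Matrix.of fun j i => boolSign (σ j i)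

def signProjection {d k : ℕ} (σ : Fin k → Fin d → Bool) :
    EuclideanSpace ℝ (Fin d) →ₗ[ℝ] EuclideanSpace ℝ (Fin k) :=
  (√k)⁻¹ • Matrix.toLpLin 2 2 (signMatrix σ)

section SignProjection

variable {d k : ℕ} {ε : ℝ}

lemma norm_signProjection_sq (σ : Fin k → Fin d → Bool) (v : EuclideanSpace ℝ (Fin d)) :
    ‖signProjection σ v‖ ^ 2 = (∑ j, rademacherSum v.ofLp (σ j) ^ 2) / k := by
  rw [EuclideanSpace.norm_sq_eq, div_eq_inv_mul, mul_sum]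
  refine sum_congr rfl fun j _ => ?_
  simp only [signProjection, LinearMap.smul_apply, Matrix.toLpLin_apply, PiLp.smul_apply,
    smul_eq_mul, norm_mul, mul_pow, norm_inv, Real.norm_eq_abs, sq_abs]
  rw [abs_of_nonneg (sqrt_nonneg _), inv_pow, sq_sqrt (Nat.cast_nonneg k)]
  rfl

lemma card_filter_norm_signProjection_notMem_Icc_le {u : EuclideanSpace ℝ (Fin d)} (hu : ‖u‖ = 1)
    (hk : 0 < k) (hε0 : 0 ≤ ε) (hε1 : ε ≤ 1) :
    (#{σ : Fin k → Fin d → Bool | ‖signProjection σ u‖ ∉ Set.Icc (1 - ε) (1 + ε)} : ℝ) ≤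
      2 * 2 ^ (d * k) * exp (-(3 / 25) * ε ^ 2 * k) := by
  set Q := fun σ : Fin k → Fin d → Bool => ∑ j, rademacherSum u.ofLp (σ j) ^ 2
  have hx : ∑ i, u.ofLp i ^ 2 = 1 := by
    simpa [hu] using (EuclideanSpace.norm_sq_eq u).symm
  have hkR : (0 : ℝ) < k := Nat.cast_pos.2 hk
  have deviation : ∀ σ, ‖signProjection σ u‖ ∉ Set.Icc (1 - ε) (1 + ε) →
      Q σ ≤ (1 - ε) * k ∨ (1 + ε) * k ≤ Q σ := fun σ hσ => by
    have hQ : ‖signProjection σ u‖ ^ 2 * k = Q σ := by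
      rw [norm_signProjection_sq, div_mul_cancel₀ _ hkR.ne']
    rw [Set.mem_Icc, not_and_or, not_le, not_le] at hσ
    rcases hσ with h | h
    · left
      have : ‖signProjection σ u‖ ^ 2 ≤ 1 - ε := by nlinarith [norm_nonneg (signProjection σ u)]
      nlinarith
    · right
      have : 1 + ε ≤ ‖signProjection σ u‖ ^ 2 := by nlinarith
      nlinarith
  calc (#{σ : Fin k → Fin d → Bool | ‖signProjection σ u‖ ∉ Set.Icc (1 - ε) (1 + ε)} : ℝ)
      ≤ #{σ | Q σ ≤ (1 - ε) * k} + #{σ | (1 + ε) * k ≤ Q σ} := by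
        norm_cast
        refine (card_le_card fun σ hσ => ?_).trans (card_union_le _ _)
        rw [← filter_or]
        exact mem_filter.2 ⟨mem_univ _, deviation σ (mem_filter.1 hσ).2⟩
    _ ≤ 2 ^ (d * k) * exp (-(1 / 6) * ε ^ 2 * k) + 2 ^ (d * k) * exp (-(3 / 25) * ε ^ 2 * k) :=
        add_le_add
          (card_le_of_forall_sum_rademacherSum_sq_le hx hε0 _ fun σ hσ => (mem_filter.1 hσ).2)
          (card_le_of_forall_le_sum_rademacherSum_sq hx hε0 hε1 _ fun σ hσ => (mem_filter.1 hσ).2)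
    _ ≤ 2 * 2 ^ (d * k) * exp (-(3 / 25) * ε ^ 2 * k) := by
        have : exp (-(1 / 6) * ε ^ 2 * k) ≤ exp (-(3 / 25) * ε ^ 2 * k) := by
          refine exp_le_exp.2 ?_
          nlinarith [mul_nonneg (sq_nonneg ε) hkR.le]
        nlinarith [pow_pos (two_pos : (0 : ℝ) < 2) (d * k)]

end SignProjection

lemma exists_signProjection_forall_norm_mem_Icc {d k : ℕ} {ε : ℝ}
    (U : Finset (EuclideanSpace ℝ (Fin d))) (hU : ∀ u ∈ U, ‖u‖ = 1) (hk : 0 < k)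
    (hε0 : 0 ≤ ε) (hε1 : ε ≤ 1) (hcard : 2 * (#U : ℝ) < exp (3 / 25 * ε ^ 2 * k)) :
    ∃ σ : Fin k → Fin d → Bool, ∀ u ∈ U, ‖signProjection σ u‖ ∈ Set.Icc (1 - ε) (1 + ε) := by
  by_contra! hbad
  set bad := fun u : EuclideanSpace ℝ (Fin d) =>
    ({σ | ‖signProjection σ u‖ ∉ Set.Icc (1 - ε) (1 + ε)} : Finset (Fin k → Fin d → Bool))
  have hcover : (univ : Finset (Fin k → Fin d → Bool)) ⊆ U.biUnion bad := fun σ _ => by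
    obtain ⟨u, hu, hσ⟩ := hbad σ
    exact mem_biUnion.2 ⟨u, hu, mem_filter.2 ⟨mem_univ _, hσ⟩⟩
  have := calc ((2 : ℝ) ^ (d * k))
      = #(univ : Finset (Fin k → Fin d → Bool)) := by simp [pow_mul]
    _ ≤ ∑ u ∈ U, (#(bad u) : ℝ) := by exact_mod_cast (card_le_card hcover).trans card_biUnion_le
    _ ≤ ∑ u ∈ U, 2 * 2 ^ (d * k) * exp (-(3 / 25) * ε ^ 2 * k) := sum_le_sum fun u hu =>
        card_filter_norm_signProjection_notMem_Icc_le (hU u hu) hk hε0 hε1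
    _ = 2 ^ (d * k) * (2 * #U / exp (3 / 25 * ε ^ 2 * k)) := by
        rw [sum_const, nsmul_eq_mul, neg_mul, neg_mul, exp_neg]; ring
    _ < 2 ^ (d * k) * 1 := by gcongr; rwa [div_lt_one (exp_pos _)]
  linarith

lemma isJLEmbedding_of_forall_norm_mem_Icc {d k : ℕ} {ε : ℝ}
    (f : EuclideanSpace ℝ (Fin d) →ₗ[ℝ] EuclideanSpace ℝ (Fin k))
    (X : Set (EuclideanSpace ℝ (Fin d)))
    (hf : ∀ p ∈ X, ∀ q ∈ X, p ≠ q → ‖f (‖p - q‖⁻¹ • (p - q))‖ ∈ Set.Icc (1 - ε) (1 + ε)) :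
    IsJLEmbedding ε f X := by
  intro p hp q hq
  rcases eq_or_ne p q with rfl | hpq
  · simp
  have hscale : ‖f p - f q‖ = ‖p - q‖ * ‖f (‖p - q‖⁻¹ • (p - q))‖ := by
    rw [map_smul, norm_smul, norm_inv, norm_norm, mul_inv_cancel_left₀ (by simpa [sub_eq_zero]),
      map_sub]
  obtain ⟨hlo, hhi⟩ := hf p hp q hq hpq
  rw [hscale]
  exact ⟨by nlinarith [norm_nonneg (p - q)], by nlinarith [norm_nonneg (p - q)]⟩

lemma exists_isJLEmbedding_signProjection {d k : ℕ} {ε : ℝ} (X : Finset (EuclideanSpace ℝ (Fin d)))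
    (hk : 0 < k) (hε0 : 0 ≤ ε) (hε1 : ε ≤ 1) (hcard : 2 * (#X : ℝ) ^ 2 < exp (3 / 25 * ε ^ 2 * k)) :
    ∃ σ : Fin k → Fin d → Bool, IsJLEmbedding ε (signProjection σ) X := by
  set U := X.offDiag.image fun pq => ‖pq.1 - pq.2‖⁻¹ • (pq.1 - pq.2)
  have hU : ∀ u ∈ U, ‖u‖ = 1 := by
    simp only [U, mem_image, mem_offDiag]
    rintro _ ⟨⟨p, q⟩, ⟨-, -, hpq⟩, rfl⟩
    exact norm_smul_inv_norm (sub_ne_zero.2 hpq)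
  have hUcard : #U ≤ #X ^ 2 := calc
    #U ≤ #X.offDiag := card_image_le
    _ ≤ #X ^ 2 := by rw [offDiag_card, sq]; exact Nat.sub_le _ _
  obtain ⟨σ, hσ⟩ := exists_signProjection_forall_norm_mem_Icc U hU hk hε0 hε1
    (lt_of_le_of_lt (by gcongr; exact_mod_cast hUcard) hcard)
  exact ⟨σ, isJLEmbedding_of_forall_norm_mem_Icc _ _ fun p hp q hq hpq =>
    hσ _ (mem_image.2 ⟨(p, q), mem_offDiag.2 ⟨hp, hq, hpq⟩, rfl⟩)⟩

/-- the (deterministic, existential form of the) Johnson–Lindenstrauss lemma. -/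
theorem statement14 : ∃ C : ℝ, 0 < C ∧
    ∀ (n : ℕ), 2 ≤ n → ∀ ε : ℝ, ε ∈ Set.Ioo (0:ℝ) 1 →
      ∀ (d : ℕ) (X : Finset (EuclideanSpace ℝ (Fin d))), X.card = n →
      ∃ (d' : ℕ) (f : EuclideanSpace ℝ (Fin d) →ₗ[ℝ] EuclideanSpace ℝ (Fin d')),
        d' ≤ ⌈C * ε⁻¹ ^ 2 * Real.log (n : ℝ)⌉₊ ∧
        ∀ p ∈ X, ∀ q ∈ X,
          (1 - ε) * ‖p - q‖ ≤ ‖f p - f q‖ ∧ ‖f p - f q‖ ≤ (1 + ε) * ‖p - q‖ := by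
  refine ⟨50, by norm_num, fun n hn ε ⟨hε0, hε1⟩ d X hX => ?_⟩
  set k := ⌈50 * ε⁻¹ ^ 2 * log n⌉₊
  have hn2 : (2 : ℝ) ≤ n := by exact_mod_cast hn
  have hlog : 0 < log n := log_pos (by linarith)
  have hk : 0 < k := Nat.ceil_pos.2 (by positivity)
  have hεk : 50 * log n ≤ ε ^ 2 * k :=
    calc 50 * log n = ε ^ 2 * (50 * ε⁻¹ ^ 2 * log n) := by field_simp
      _ ≤ ε ^ 2 * k := by gcongr; exact Nat.le_ceil _
  have hcard : 2 * (#X : ℝ) ^ 2 < exp (3 / 25 * ε ^ 2 * k) :=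
    calc 2 * (#X : ℝ) ^ 2 = 2 * n ^ 2 := by rw [hX]
      _ < (n : ℝ) ^ 6 := by nlinarith [pow_le_pow_left₀ (by norm_num) hn2 4]
      _ = exp ((6 : ℕ) * log n) := by rw [exp_nat_mul, exp_log (by linarith)]
      _ ≤ exp (3 / 25 * ε ^ 2 * k) := exp_le_exp.2 (by push_cast; linarith)
  obtain ⟨σ, hσ⟩ := exists_isJLEmbedding_signProjection X hk hε0.le hε1.le hcard
  exact ⟨k, signProjection σ, le_rfl, hσ⟩

end
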